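/- Let v be a mean-zero random vector in R^d with covariance Σ which is L8-L2 hypercontractive, and let ṽ = v·1{‖v‖ ≤ α} be its truncation at level α. Then the spectral norm of E[ṽṽ^⊤] − Σ is at most L·‖Σ‖·Tr(Σ)/α². -/

import Mathlib

open MeasureTheory Matrix

/-
Let `c = 1{‖v‖ > α}`. Since `c² = c`, the bias `Σ - Σ̃` is the second moment matrix of `c • v`, a
positive semidefinite matrix whose norm is the supremum over unit `x` of `E[c ⟨v, x⟩²]`. By
Cauchy–Schwarz, `E[c ⟨v, x⟩²]² ≤ P[‖v‖ > α] · E⟨v, x⟩⁴`, and Cauchy–Schwarz against `1` turns the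
L8-L2 bound into `E⟨v, x⟩⁴ ≤ L (E⟨v, x⟩²)² ≤ L ‖Σ‖²`. Finally Markov gives
`P[‖v‖ > α] ≤ E‖v‖⁴ / α⁴`, and the triangle inequality in `L²` for `‖v‖² = ∑ vᵢ²` together with
`E vᵢ⁴ ≤ L (E vᵢ²)²` gives `E‖v‖⁴ ≤ L (Tr Σ)²`.
-/

/-- Spectral (operator) norm of a real matrix. -/
noncomputable def opNorm {d : ℕ} (A : Matrix (Fin d) (Fin d) ℝ) : ℝ :=
  ‖Matrix.toEuclideanCLM (𝕜 := ℝ) A‖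

/-- Second moment matrix `E[v vᵀ]` of a random vector. -/
noncomputable def secondMoment {Ω : Type*} [MeasurableSpace Ω] (μ : Measure Ω) {d : ℕ}
    (v : Ω → Fin d → ℝ) : Matrix (Fin d) (Fin d) ℝ :=
  Matrix.of fun i j => ∫ ω, v ω i * v ω j ∂μ

section Moments

variable {Ω : Type*} [MeasurableSpace Ω] {μ : Measure Ω}

lemma sq_integral_mul_le {f g : Ω → ℝ} (hf : MemLp f 2 μ) (hg : MemLp g 2 μ) :
    (∫ ω, f ω * g ω ∂μ) ^ 2 ≤ (∫ ω, f ω ^ 2 ∂μ) * ∫ ω, g ω ^ 2 ∂μ := by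
  have hfg : Integrable (fun ω => f ω * g ω) μ := hf.integrable_mul hg
  -- `t ↦ ∫ (f + t g)²` is a nonnegative quadratic, so its discriminant is nonpositive
  have hquad : ∀ t : ℝ, 0 ≤ (∫ ω, g ω ^ 2 ∂μ) * (t * t) + (2 * ∫ ω, f ω * g ω ∂μ) * t
      + ∫ ω, f ω ^ 2 ∂μ := fun t => calc
    0 ≤ ∫ ω, (f ω + t * g ω) ^ 2 ∂μ := integral_nonneg fun ω => sq_nonneg _
    _ = ∫ ω, (t * t) * g ω ^ 2 + (2 * t) * (f ω * g ω) + f ω ^ 2 ∂μ := by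
      congr with ω; ring
    _ = _ := by
      have hsum : Integrable (fun ω => (t * t) * g ω ^ 2 + (2 * t) * (f ω * g ω)) μ :=
        (hg.integrable_sq.const_mul _).add (hfg.const_mul _)
      rw [integral_add hsum hf.integrable_sq,
        integral_add (hg.integrable_sq.const_mul _) (hfg.const_mul _),
        integral_const_mul, integral_const_mul]
      ring
  have := discrim_le_zero hquad
  rw [discrim] at this
  linarith

lemma MeasureTheory.Integrable.pow_of_le [IsFiniteMeasure μ] {X : Ω → ℝ} {m n : ℕ}
    (hX : AEMeasurable X μ) (hn : Integrable (fun ω => X ω ^ n) μ) (hmn : m ≤ n) :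
    Integrable (fun ω => X ω ^ m) μ := by
  refine ((integrable_const 1).add hn.norm).mono' (hX.pow_const m).aestronglyMeasurable
    (.of_forall fun ω => ?_)
  simp only [Pi.add_apply, norm_pow]
  rcases le_total ‖X ω‖ 1 with h | h
  · linarith [pow_le_one₀ (n := m) (norm_nonneg _) h, pow_nonneg (norm_nonneg (X ω)) n]
  · linarith [pow_le_pow_right₀ h hmn]

lemma memLp_two_sq_of_integrable_pow_four {X : Ω → ℝ} (hX : AEMeasurable X μ)
    (h4 : Integrable (fun ω => X ω ^ 4) μ) : MemLp (fun ω => X ω ^ 2) 2 μ :=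
  (memLp_two_iff_integrable_sq (hX.pow_const 2).aestronglyMeasurable).2
    (by simpa only [← pow_mul] using h4)

lemma memLp_two_of_integrable_pow_four [IsFiniteMeasure μ] {X : Ω → ℝ} (hX : AEMeasurable X μ)
    (h4 : Integrable (fun ω => X ω ^ 4) μ) : MemLp X 2 μ :=
  (memLp_two_iff_integrable_sq hX.aestronglyMeasurable).2 (h4.pow_of_le hX (by norm_num))

lemma integral_pow_four_le_of_integral_pow_eight_le [IsProbabilityMeasure μ] {X : Ω → ℝ}
    {L : ℝ} (hL : 0 ≤ L) (hX : AEMeasurable X μ) (h8 : Integrable (fun ω => X ω ^ 8) μ)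
    (hmom : ∫ ω, X ω ^ 8 ∂μ ≤ L ^ 2 * (∫ ω, X ω ^ 2 ∂μ) ^ 4) :
    ∫ ω, X ω ^ 4 ∂μ ≤ L * (∫ ω, X ω ^ 2 ∂μ) ^ 2 := by
  have h4 : MemLp (fun ω => X ω ^ 4) 2 μ :=
    (memLp_two_iff_integrable_sq (hX.pow_const 4).aestronglyMeasurable).2
      (by simpa only [← pow_mul] using h8)
  have hcs := sq_integral_mul_le h4 (memLp_const 1)
  simp only [mul_one, one_pow, integral_const, probReal_univ, smul_eq_mul, ← pow_mul] at hcs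
  refine le_of_pow_le_pow_left₀ two_ne_zero (by positivity) ?_
  linarith

lemma sq_integral_indicator_mul_sq_le [IsFiniteMeasure μ] {c X : Ω → ℝ}
    (hc : ∀ ω, c ω = 0 ∨ c ω = 1) (hcm : AEMeasurable c μ) (hX : AEMeasurable X μ)
    (h4 : Integrable (fun ω => X ω ^ 4) μ) :
    (∫ ω, c ω * X ω ^ 2 ∂μ) ^ 2 ≤ (∫ ω, c ω ∂μ) * ∫ ω, X ω ^ 4 ∂μ := by
  have hc2 : MemLp c 2 μ := MemLp.of_bound hcm.aestronglyMeasurable 1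
    (.of_forall fun ω => by rcases hc ω with h | h <;> simp [h])
  have hcc : ∀ ω, c ω ^ 2 = c ω := fun ω => by rcases hc ω with h | h <;> simp [h]
  simpa only [hcc, ← pow_mul] using
    sq_integral_mul_le hc2 (memLp_two_sq_of_integrable_pow_four hX h4)

lemma integral_sq_sum_le {ι : Type*} (s : Finset ι) {Y : ι → Ω → ℝ}
    (hY : ∀ i ∈ s, MemLp (Y i) 2 μ) :
    ∫ ω, (∑ i ∈ s, Y i ω) ^ 2 ∂μ ≤ (∑ i ∈ s, √(∫ ω, Y i ω ^ 2 ∂μ)) ^ 2 := by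
  have hprod : ∀ i ∈ s, ∀ j ∈ s, Integrable (fun ω => Y i ω * Y j ω) μ :=
    fun i hi j hj => (hY i hi).integrable_mul (hY j hj)
  have hcs : ∀ i ∈ s, ∀ j ∈ s,
      ∫ ω, Y i ω * Y j ω ∂μ ≤ √(∫ ω, Y i ω ^ 2 ∂μ) * √(∫ ω, Y j ω ^ 2 ∂μ) := by
    intro i hi j hj
    rw [← Real.sqrt_mul (integral_nonneg fun ω => sq_nonneg _)]
    exact (le_abs_self _).trans <| Real.abs_le_sqrt <| sq_integral_mul_le
      (hY i hi) (hY j hj)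
  calc ∫ ω, (∑ i ∈ s, Y i ω) ^ 2 ∂μ = ∑ i ∈ s, ∑ j ∈ s, ∫ ω, Y i ω * Y j ω ∂μ := by
        simp_rw [sq, Finset.sum_mul_sum]
        rw [integral_finsetSum _ fun i hi => integrable_finsetSum _ (hprod i hi)]
        exact Finset.sum_congr rfl fun i hi => integral_finsetSum _ (hprod i hi)
    _ ≤ ∑ i ∈ s, ∑ j ∈ s, √(∫ ω, Y i ω ^ 2 ∂μ) * √(∫ ω, Y j ω ^ 2 ∂μ) :=
        Finset.sum_le_sum fun i hi => Finset.sum_le_sum fun j hj => hcs i hi j hj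
    _ = (∑ i ∈ s, √(∫ ω, Y i ω ^ 2 ∂μ)) ^ 2 := by rw [sq, Finset.sum_mul_sum]

end Moments

section SpectralNorm

variable {d : ℕ}

lemma real_inner_toEuclideanCLM_self (A : Matrix (Fin d) (Fin d) ℝ)
    (x : EuclideanSpace ℝ (Fin d)) :
    inner ℝ (toEuclideanCLM (𝕜 := ℝ) A x) x = x.ofLp ⬝ᵥ (A *ᵥ x.ofLp) := by
  simp [EuclideanSpace.inner_eq_star_dotProduct]

lemma EuclideanSpace.real_norm_sq_eq_dotProduct (x : EuclideanSpace ℝ (Fin d)) :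
    ‖x‖ ^ 2 = x.ofLp ⬝ᵥ x.ofLp := by
  rw [← real_inner_self_eq_norm_sq, EuclideanSpace.inner_eq_star_dotProduct, star_trivial]

lemma dotProduct_mulVec_le_opNorm (A : Matrix (Fin d) (Fin d) ℝ) (x : Fin d → ℝ) :
    x ⬝ᵥ (A *ᵥ x) ≤ opNorm A * (x ⬝ᵥ x) := by
  set y : EuclideanSpace ℝ (Fin d) := WithLp.toLp 2 x
  have h := (real_inner_le_norm (toEuclideanCLM (𝕜 := ℝ) A y) y).trans
    (mul_le_mul_of_nonneg_right ((toEuclideanCLM (𝕜 := ℝ) A).le_opNorm y) (norm_nonneg y))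
  rwa [real_inner_toEuclideanCLM_self, mul_assoc, ← sq,
    EuclideanSpace.real_norm_sq_eq_dotProduct] at h

lemma opNorm_le_of_abs_dotProduct_mulVec_le {A : Matrix (Fin d) (Fin d) ℝ} (hA : A.IsHermitian)
    {C : ℝ} (hC : 0 ≤ C) (h : ∀ x, |x ⬝ᵥ (A *ᵥ x)| ≤ C * (x ⬝ᵥ x)) : opNorm A ≤ C := by
  rw [opNorm, ContinuousLinearMap.norm_eq_iSup_rayleighQuotient _
    (isSymmetric_toEuclideanLin_iff.2 hA)]
  refine ciSup_le fun x => ?_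
  rw [ContinuousLinearMap.rayleighQuotient, ContinuousLinearMap.reApplyInnerSelf_apply, abs_div,
    abs_sq]
  refine div_le_of_le_mul₀ (sq_nonneg _) hC ?_
  rw [real_inner_toEuclideanCLM_self, EuclideanSpace.real_norm_sq_eq_dotProduct]
  exact h x.ofLp

lemma opNorm_neg (A : Matrix (Fin d) (Fin d) ℝ) : opNorm (-A) = opNorm A := by
  rw [opNorm, opNorm, map_neg, norm_neg]

end SpectralNorm

section SecondMoment

variable {Ω : Type*} [MeasurableSpace Ω] {μ : Measure Ω} {d : ℕ}

lemma isHermitian_secondMoment (v : Ω → Fin d → ℝ) : (secondMoment μ v).IsHermitian :=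
  IsHermitian.ext fun i j => by simp [secondMoment, mul_comm]

lemma trace_secondMoment (v : Ω → Fin d → ℝ) :
    (secondMoment μ v).trace = ∑ i, ∫ ω, v ω i ^ 2 ∂μ := by
  simp [Matrix.trace, secondMoment, sq]

lemma dotProduct_secondMoment_mulVec {v : Ω → Fin d → ℝ}
    (hv : ∀ i j, Integrable (fun ω => v ω i * v ω j) μ) (x : Fin d → ℝ) :
    x ⬝ᵥ (secondMoment μ v *ᵥ x) = ∫ ω, (x ⬝ᵥ v ω) ^ 2 ∂μ := by
  have hsq : ∀ ω, (x ⬝ᵥ v ω) ^ 2 = ∑ i, ∑ j, x i * x j * (v ω i * v ω j) := fun ω => by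
    simp only [dotProduct, sq, Finset.sum_mul_sum]
    exact Finset.sum_congr rfl fun i _ => Finset.sum_congr rfl fun j _ => by ring
  have hint : ∀ i j, Integrable (fun ω => x i * x j * (v ω i * v ω j)) μ :=
    fun i j => (hv i j).const_mul _
  simp_rw [hsq]
  rw [integral_finsetSum _ fun i _ => integrable_finsetSum _ fun j _ => hint i j]
  simp only [integral_finsetSum _ fun j _ => hint _ j, integral_const_mul, dotProduct, mulVec,
    secondMoment, of_apply, Finset.mul_sum]
  exact Finset.sum_congr rfl fun i _ => Finset.sum_congr rfl fun j _ => by ring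

lemma aemeasurable_dotProduct {v : Ω → Fin d → ℝ} (hvm : ∀ i, AEMeasurable (fun ω => v ω i) μ)
    (u : Fin d → ℝ) : AEMeasurable (fun ω => u ⬝ᵥ v ω) μ :=
  Finset.aemeasurable_fun_sum _ fun i _ => (hvm i).const_mul (u i)

lemma integral_sq_sum_sq_le_mul_trace_sq {v : Ω → Fin d → ℝ} {L : ℝ} (hL : 0 ≤ L)
    (hvm : ∀ i, AEMeasurable (fun ω => v ω i) μ) (h4 : ∀ i, Integrable (fun ω => v ω i ^ 4) μ)
    (hmom : ∀ i, ∫ ω, v ω i ^ 4 ∂μ ≤ L * (∫ ω, v ω i ^ 2 ∂μ) ^ 2) :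
    ∫ ω, (∑ i, v ω i ^ 2) ^ 2 ∂μ ≤ L * (secondMoment μ v).trace ^ 2 := by
  have hsqrt : ∀ i, √(∫ ω, (v ω i ^ 2) ^ 2 ∂μ) ≤ √L * ∫ ω, v ω i ^ 2 ∂μ := fun i => by
    rw [← Real.sqrt_sq (integral_nonneg fun ω => sq_nonneg (v ω i)), ← Real.sqrt_mul hL]
    simpa only [← pow_mul] using Real.sqrt_le_sqrt (hmom i)
  calc ∫ ω, (∑ i, v ω i ^ 2) ^ 2 ∂μ ≤ (∑ i, √(∫ ω, (v ω i ^ 2) ^ 2 ∂μ)) ^ 2 :=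
        integral_sq_sum_le _ fun i _ => memLp_two_sq_of_integrable_pow_four (hvm i) (h4 i)
    _ ≤ (∑ i, √L * ∫ ω, v ω i ^ 2 ∂μ) ^ 2 :=
        pow_le_pow_left₀ (Finset.sum_nonneg fun i _ => Real.sqrt_nonneg _)
          (Finset.sum_le_sum fun i _ => hsqrt i) 2
    _ = L * (secondMoment μ v).trace ^ 2 := by
        rw [← Finset.mul_sum, trace_secondMoment, mul_pow, Real.sq_sqrt hL]

lemma integrable_smul_mul_smul {c : Ω → ℝ} {v : Ω → Fin d → ℝ}
    (hc : ∀ ω, c ω = 0 ∨ c ω = 1) (hcm : AEMeasurable c μ)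
    (hv : ∀ i j, Integrable (fun ω => v ω i * v ω j) μ) (i j : Fin d) :
    Integrable (fun ω => (c ω • v ω) i * (c ω • v ω) j) μ := by
  refine ((hv i j).bdd_mul (c := 1) hcm.aestronglyMeasurable
    (.of_forall fun ω => ?_)).congr (.of_forall fun ω => ?_)
  · rcases hc ω with h | h <;> simp [h]
  · rcases hc ω with h | h <;> simp [h]

lemma opNorm_secondMoment_smul_le [IsFiniteMeasure μ] {c : Ω → ℝ} {v : Ω → Fin d → ℝ}
    {L q : ℝ} (hc : ∀ ω, c ω = 0 ∨ c ω = 1) (hcm : AEMeasurable c μ)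
    (hvm : ∀ i, AEMeasurable (fun ω => v ω i) μ)
    (hv : ∀ i j, Integrable (fun ω => v ω i * v ω j) μ)
    (h4int : ∀ x : Fin d → ℝ, Integrable (fun ω => (x ⬝ᵥ v ω) ^ 4) μ)
    (h4 : ∀ x : Fin d → ℝ, ∫ ω, (x ⬝ᵥ v ω) ^ 4 ∂μ ≤ L * (∫ ω, (x ⬝ᵥ v ω) ^ 2 ∂μ) ^ 2)
    (hq : 0 ≤ q) (hcq : (∫ ω, c ω ∂μ) * L ≤ q ^ 2) :
    opNorm (secondMoment μ fun ω => c ω • v ω) ≤ q * opNorm (secondMoment μ v) := by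
  have hnorm : 0 ≤ opNorm (secondMoment μ v) := norm_nonneg _
  refine opNorm_le_of_abs_dotProduct_mulVec_le (isHermitian_secondMoment _) (by positivity)
    fun x => ?_
  have hc0 : ∀ ω, 0 ≤ c ω := fun ω => by rcases hc ω with h | h <;> simp [h]
  have hcX : ∀ ω, (x ⬝ᵥ (c ω • v ω)) ^ 2 = c ω * (x ⬝ᵥ v ω) ^ 2 := fun ω => by
    rcases hc ω with h | h <;> simp [h]
  have hX2 : ∫ ω, (x ⬝ᵥ v ω) ^ 2 ∂μ ≤ opNorm (secondMoment μ v) * (x ⬝ᵥ x) := by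
    rw [← dotProduct_secondMoment_mulVec hv]
    exact dotProduct_mulVec_le_opNorm _ _
  have hcs := sq_integral_indicator_mul_sq_le hc hcm (aemeasurable_dotProduct hvm x) (h4int x)
  rw [dotProduct_secondMoment_mulVec (integrable_smul_mul_smul hc hcm hv) x,
    abs_of_nonneg (integral_nonneg fun ω => sq_nonneg _)]
  simp_rw [hcX]
  have hxx : 0 ≤ x ⬝ᵥ x := by simpa using dotProduct_self_star_nonneg x
  refine le_of_pow_le_pow_left₀ two_ne_zero (by positivity) ?_
  calc (∫ ω, c ω * (x ⬝ᵥ v ω) ^ 2 ∂μ) ^ 2 ≤ (∫ ω, c ω ∂μ) * ∫ ω, (x ⬝ᵥ v ω) ^ 4 ∂μ := hcs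
    _ ≤ (∫ ω, c ω ∂μ) * (L * (∫ ω, (x ⬝ᵥ v ω) ^ 2 ∂μ) ^ 2) :=
        mul_le_mul_of_nonneg_left (h4 x) (integral_nonneg hc0)
    _ = (∫ ω, c ω ∂μ) * L * (∫ ω, (x ⬝ᵥ v ω) ^ 2 ∂μ) ^ 2 := by ring
    _ ≤ q ^ 2 * (opNorm (secondMoment μ v) * (x ⬝ᵥ x)) ^ 2 :=
        mul_le_mul hcq (pow_le_pow_left₀ (integral_nonneg fun ω => sq_nonneg _) hX2 2)
          (sq_nonneg _) (sq_nonneg q)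
    _ = (q * opNorm (secondMoment μ v) * (x ⬝ᵥ x)) ^ 2 := by ring

end SecondMoment

section Truncation

variable {Ω : Type*} {d : ℕ}

-- `1{‖v‖ > α}`, so that the truncation is `ṽ = (1 - tailIndicator α v) • v`
noncomputable def tailIndicator (α : ℝ) (v : Ω → Fin d → ℝ) (ω : Ω) : ℝ :=
  if ∑ l, v ω l ^ 2 ≤ α ^ 2 then 0 else 1

lemma tailIndicator_eq_zero_or_one (α : ℝ) (v : Ω → Fin d → ℝ) (ω : Ω) :
    tailIndicator α v ω = 0 ∨ tailIndicator α v ω = 1 := by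
  unfold tailIndicator; split_ifs <;> simp

variable [MeasurableSpace Ω] {μ : Measure Ω}

lemma aemeasurable_tailIndicator {α : ℝ} {v : Ω → Fin d → ℝ}
    (hvm : ∀ i, AEMeasurable (fun ω => v ω i) μ) : AEMeasurable (tailIndicator α v) μ :=
  (Measurable.ite measurableSet_Iic measurable_const measurable_const).comp_aemeasurable
    (Finset.aemeasurable_fun_sum _ fun l _ => (hvm l).pow_const 2)

lemma mul_integral_tailIndicator_le [IsFiniteMeasure μ] {α : ℝ} {v : Ω → Fin d → ℝ}
    (hvm : ∀ i, AEMeasurable (fun ω => v ω i) μ) (h4 : ∀ i, Integrable (fun ω => v ω i ^ 4) μ) :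
    α ^ 4 * ∫ ω, tailIndicator α v ω ∂μ ≤ ∫ ω, (∑ i, v ω i ^ 2) ^ 2 ∂μ := by
  have hc : Integrable (tailIndicator α v) μ :=
    (integrable_const 1).mono' (aemeasurable_tailIndicator hvm).aestronglyMeasurable
      (.of_forall fun ω => by rcases tailIndicator_eq_zero_or_one α v ω with h | h <;> simp [h])
  have hS : Integrable (fun ω => (∑ i, v ω i ^ 2) ^ 2) μ :=
    (memLp_finsetSum _ fun i _ =>
      memLp_two_sq_of_integrable_pow_four (hvm i) (h4 i)).integrable_sq
  rw [← integral_const_mul]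
  refine integral_mono (hc.const_mul _) hS fun ω => ?_
  simp only [tailIndicator]
  split_ifs with h
  · simp only [mul_zero]; positivity
  · have : α ^ 2 < ∑ i, v ω i ^ 2 := not_le.1 h
    nlinarith [sq_nonneg α]

lemma of_integral_ite_sub_secondMoment_eq_neg {α : ℝ} {v : Ω → Fin d → ℝ}
    (hvm : ∀ i, AEMeasurable (fun ω => v ω i) μ)
    (hv : ∀ i j, Integrable (fun ω => v ω i * v ω j) μ) :
    (Matrix.of fun i j => ∫ ω, (if ∑ l, v ω l ^ 2 ≤ α ^ 2 then v ω i * v ω j else 0) ∂μ) -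
      secondMoment μ v = -secondMoment μ (fun ω => tailIndicator α v ω • v ω) := by
  ext i j
  have htail := integrable_smul_mul_smul (tailIndicator_eq_zero_or_one α v)
    (aemeasurable_tailIndicator hvm) hv i j
  have hite : ∀ ω, (if ∑ l, v ω l ^ 2 ≤ α ^ 2 then v ω i * v ω j else 0)
      = v ω i * v ω j - (tailIndicator α v ω • v ω) i * (tailIndicator α v ω • v ω) j := by
    intro ω; unfold tailIndicator; split_ifs <;> simp
  simp only [secondMoment, Matrix.sub_apply, Matrix.neg_apply, of_apply, hite,
    integral_sub (hv i j) htail]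
  ring

end Truncation

theorem stmt3_general {Ω : Type*} [MeasurableSpace Ω] (μ : Measure Ω) [IsProbabilityMeasure μ]
    {d : ℕ} (v : Ω → Fin d → ℝ) (L α : ℝ) (hL : 0 < L) (hα : 0 < α)
    (hvm : ∀ i, AEMeasurable (fun ω => v ω i) μ)
    (hint : ∀ u : Fin d → ℝ, Integrable (fun ω => (∑ i, u i * v ω i) ^ 8) μ)
    (hmom : ∀ u : Fin d → ℝ,
      ∫ ω, (∑ i, u i * v ω i) ^ 8 ∂μ ≤ L ^ 2 * (∫ ω, (∑ i, u i * v ω i) ^ 2 ∂μ) ^ 4) :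
    opNorm
      ((Matrix.of fun i j =>
          ∫ ω, (if (∑ l, v ω l ^ 2) ≤ α ^ 2 then v ω i * v ω j else 0) ∂μ) -
        secondMoment μ v) ≤
      L * opNorm (secondMoment μ v) * (secondMoment μ v).trace / α ^ 2 := by
  have h4int (u : Fin d → ℝ) : Integrable (fun ω => (u ⬝ᵥ v ω) ^ 4) μ :=
    (hint u).pow_of_le (aemeasurable_dotProduct hvm u) (by norm_num)
  have h4 (u : Fin d → ℝ) : ∫ ω, (u ⬝ᵥ v ω) ^ 4 ∂μ ≤ L * (∫ ω, (u ⬝ᵥ v ω) ^ 2 ∂μ) ^ 2 :=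
    integral_pow_four_le_of_integral_pow_eight_le hL.le (aemeasurable_dotProduct hvm u) (hint u)
      (hmom u)
  have hv4 (i : Fin d) : Integrable (fun ω => v ω i ^ 4) μ := by
    simpa using h4int (Pi.single i 1)
  have hv (i j : Fin d) : Integrable (fun ω => v ω i * v ω j) μ :=
    (memLp_two_of_integrable_pow_four (hvm i) (hv4 i)).integrable_mul
      (memLp_two_of_integrable_pow_four (hvm j) (hv4 j))
  have htail : α ^ 4 * ∫ ω, tailIndicator α v ω ∂μ ≤ L * (secondMoment μ v).trace ^ 2 :=
    (mul_integral_tailIndicator_le hvm hv4).trans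
      (integral_sq_sum_sq_le_mul_trace_sq hL.le hvm hv4 fun i => by
        simpa using h4 (Pi.single i 1))
  have hTr : 0 ≤ (secondMoment μ v).trace := by
    rw [trace_secondMoment]
    exact Finset.sum_nonneg fun i _ => integral_nonneg fun ω => sq_nonneg _
  rw [of_integral_ite_sub_secondMoment_eq_neg hvm hv, opNorm_neg]
  calc _ ≤ L * (secondMoment μ v).trace / α ^ 2 * opNorm (secondMoment μ v) :=
        opNorm_secondMoment_smul_le (tailIndicator_eq_zero_or_one α v)
          (aemeasurable_tailIndicator hvm) hvm hv h4int h4 (by positivity) ?_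
    _ = _ := by ring
  rw [div_pow, le_div_iff₀ (by positivity)]
  linarith [mul_le_mul_of_nonneg_left htail hL.le]

/-- Truncation bias bound for covariance: if `v` is mean-zero with covariance `Σ`,
L8-L2 hypercontractive, and `ṽ = v·1{‖v‖ ≤ α}`, then
`‖E[ṽṽᵀ] − Σ‖ ≤ L ‖Σ‖ Tr(Σ) / α²`. -/
theorem stmt3 {Ω : Type*} [MeasurableSpace Ω] (μ : Measure Ω) [IsProbabilityMeasure μ]
    {d : ℕ} (v : Ω → Fin d → ℝ) (L α : ℝ) (hL : 0 < L) (hα : 0 < α)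
    (hvm : ∀ i, AEMeasurable (fun ω => v ω i) μ)
    (hint : ∀ u : Fin d → ℝ, Integrable (fun ω => (∑ i, u i * v ω i) ^ 8) μ)
    (hmean : ∀ i, ∫ ω, v ω i ∂μ = 0)
    (hmom : ∀ u : Fin d → ℝ,
      ∫ ω, (∑ i, u i * v ω i) ^ 8 ∂μ ≤ L ^ 2 * (∫ ω, (∑ i, u i * v ω i) ^ 2 ∂μ) ^ 4) :
    opNorm
      ((Matrix.of fun i j =>
          ∫ ω, (if (∑ l, v ω l ^ 2) ≤ α ^ 2 then v ω i * v ω j else 0) ∂μ) -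
        secondMoment μ v) ≤
      L * opNorm (secondMoment μ v) * (secondMoment μ v).trace / α ^ 2 :=
  stmt3_general μ v L α hL hα hvm hint hmom
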